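/- Two structures M₁ and M₂ that have isomorphic prime powers of ultrapowers are positively equivalent, i.e., they satisfy the same positive sentences. -/

import Mathlib

namespace PosLogic

open FirstOrder FirstOrder.Language FirstOrder.Language.Structure Set

universe u v w x y z

variable {L : FirstOrder.Language.{u, v}}

/-- Positive formulas: built from atomic formulas and `⊥` using `∧`, `∨` and `∃`. -/
inductive PosFormula (L : FirstOrder.Language.{u, v}) (α : Type y) : ℕ → Type (max u v y)
  | falsum {n : ℕ} : PosFormula L α n
  | equal {n : ℕ} (t₁ t₂ : L.Term (α ⊕ Fin n)) : PosFormula L α n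
  | rel {n l : ℕ} (R : L.Relations l) (ts : Fin l → L.Term (α ⊕ Fin n)) : PosFormula L α n
  | and {n : ℕ} (φ ψ : PosFormula L α n) : PosFormula L α n
  | or {n : ℕ} (φ ψ : PosFormula L α n) : PosFormula L α n
  | ex {n : ℕ} (φ : PosFormula L α (n + 1)) : PosFormula L α n

variable {α : Type y}

/-- Realization (satisfaction) of a positive formula. -/
def PosFormula.Realize {M : Type w} [L.Structure M] :
    ∀ {n : ℕ}, PosFormula L α n → (α → M) → (Fin n → M) → Prop
  | _, .falsum, _, _ => False
  | _, .equal t₁ t₂, v, xs => t₁.realize (Sum.elim v xs) = t₂.realize (Sum.elim v xs)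
  | _, .rel R ts, v, xs => RelMap R fun i => (ts i).realize (Sum.elim v xs)
  | _, .and φ ψ, v, xs => φ.Realize v xs ∧ ψ.Realize v xs
  | _, .or φ ψ, v, xs => φ.Realize v xs ∨ ψ.Realize v xs
  | _, .ex φ, v, xs => ∃ a, φ.Realize v (Fin.snoc xs a)

/-- Positive sentences. -/
abbrev PosSentence (L : FirstOrder.Language.{u, v}) : Type (max u v) := PosFormula L Empty 0

/-- A positive sentence holds in a structure. -/
def PosSentence.Realize (M : Type w) [L.Structure M] (φ : PosSentence L) : Prop :=
  PosFormula.Realize (M := M) φ Empty.elim (fun i => i.elim0)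

/-- Two structures are positively equivalent when they satisfy the same positive sentences. -/
def PosEquivalent (M : Type w) (N : Type x) [L.Structure M] [L.Structure N] : Prop :=
  ∀ φ : PosSentence L, PosSentence.Realize M φ ↔ PosSentence.Realize N φ

/-- A filter over a poset: a nonempty collection of upsets, upward closed among upsets and
closed under binary intersections. -/
structure PosetFilter (X : Type x) [Preorder X] where
  sets : Set (Set X)
  upper' : ∀ V ∈ sets, IsUpperSet V
  nonempty' : sets.Nonempty
  mono' : ∀ V ∈ sets, ∀ W : Set X, IsUpperSet W → V ⊆ W → W ∈ sets
  inter' : ∀ V ∈ sets, ∀ W ∈ sets, V ∩ W ∈ sets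

/-- A prime filter over a poset. -/
def PosetFilter.Prime {X : Type x} [Preorder X] (F : PosetFilter X) : Prop :=
  ∅ ∉ F.sets ∧ ∀ V W : Set X, IsUpperSet V → IsUpperSet W →
    V ∪ W ∈ F.sets → V ∈ F.sets ∨ W ∈ F.sets

/-- Predicate version: `S` is a filter over the poset `X`. -/
def IsPosetFilter {X : Type x} [Preorder X] (S : Set (Set X)) : Prop :=
  (∀ V ∈ S, IsUpperSet V) ∧ S.Nonempty ∧
    (∀ V ∈ S, ∀ W : Set X, IsUpperSet W → V ⊆ W → W ∈ S) ∧
    (∀ V ∈ S, ∀ W ∈ S, V ∩ W ∈ S)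

/-- Predicate version: `S` is a prime filter over the poset `X`. -/
def IsPrimePosetFilter {X : Type x} [Preorder X] (S : Set (Set X)) : Prop :=
  IsPosetFilter S ∧ ∅ ∉ S ∧ ∀ V W : Set X, IsUpperSet V → IsUpperSet W →
    V ∪ W ∈ S → V ∈ S ∨ W ∈ S

/-- A wellfounded forest: a poset whose principal downsets are well ordered. -/
def IsWellFoundedForest (X : Type x) [Preorder X] : Prop :=
  ∀ a : X, IsWellOrder (Set.Iic a) (· < ·)

/-- An ordered system of structures indexed by a poset. -/
structure OrderedSystem (L : FirstOrder.Language.{u, v}) (X : Type x) [Preorder X]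
    (M : X → Type w) [∀ a, L.Structure (M a)] where
  hom : ∀ ⦃a b : X⦄, a ≤ b → M a →[L] M b
  hom_id : ∀ (a : X) (m : M a), hom (le_refl a) m = m
  hom_comp : ∀ ⦃a b c : X⦄ (hab : a ≤ b) (hbc : b ≤ c) (m : M a),
    hom hbc (hom hab m) = hom (hab.trans hbc) m

variable {X : Type x} [PartialOrder X] {M : X → Type w} [∀ a, L.Structure (M a)]

/-- A compatible family in `S_F`: an element of `S_V` for some `V ∈ F`. -/
structure CompFam (D : OrderedSystem L X M) (F : PosetFilter X) where
  dom : Set X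
  dom_mem : dom ∈ F.sets
  val : ∀ a ∈ dom, M a
  compat : ∀ ⦃b c : X⦄ (hb : b ∈ dom) (hc : c ∈ dom) (hbc : b ≤ c),
    D.hom hbc (val b hb) = val c hc

variable {D : OrderedSystem L X M} {F : PosetFilter X}

/-- The set `⟦a = b⟧`. -/
def eqSet (a b : CompFam D F) : Set X :=
  {p | ∃ (ha : p ∈ a.dom) (hb : p ∈ b.dom), a.val p ha = b.val p hb}

theorem eqSet_upper (a b : CompFam D F) : IsUpperSet (eqSet a b) := by
  rintro p q hpq ⟨ha, hb, he⟩
  have hap := F.upper' _ a.dom_mem hpq ha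
  have hbp := F.upper' _ b.dom_mem hpq hb
  exact ⟨hap, hbp, by rw [← a.compat ha hap hpq, ← b.compat hb hbp hpq, he]⟩

/-- The relation `≡_F`. -/
instance CompFam.setoid (D : OrderedSystem L X M) (F : PosetFilter X) :
    Setoid (CompFam D F) where
  r a b := eqSet a b ∈ F.sets
  iseqv := by
    constructor
    · intro a
      exact F.mono' _ a.dom_mem _ (eqSet_upper a a) (fun p hp => ⟨hp, hp, rfl⟩)
    · intro a b h
      refine F.mono' _ h _ (eqSet_upper b a) ?_
      rintro p ⟨ha, hb, he⟩
      exact ⟨hb, ha, he.symm⟩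
    · intro a b c hab hbc
      refine F.mono' _ (F.inter' _ hab _ hbc) _ (eqSet_upper a c) ?_
      rintro p ⟨⟨ha, hb, h1⟩, hb', hc, helim⟩
      exact ⟨ha, hc, h1.trans helim⟩

theorem PosetFilter.univ_mem (F : PosetFilter X) : Set.univ ∈ F.sets := by
  obtain ⟨V, hV⟩ := F.nonempty'
  exact F.mono' _ hV _ isUpperSet_univ (Set.subset_univ V)

theorem PosetFilter.iInter_mem (F : PosetFilter X) :
    ∀ {n : ℕ} (s : Fin n → Set X), (∀ i, s i ∈ F.sets) → (⋂ i, s i) ∈ F.sets := by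
  intro n
  induction n with
  | zero =>
    intro s _
    rw [Set.iInter_of_empty]
    exact F.univ_mem
  | succ k ih =>
    intro s hs
    have he : (⋂ i, s i) = s 0 ∩ ⋂ i : Fin k, s i.succ := by
      ext p
      simp only [Set.mem_iInter, Set.mem_inter_iff, Fin.forall_fin_succ]
    rw [he]
    exact F.inter' _ (hs 0) _ (ih _ fun i => hs i.succ)

/-- Pointwise application of a function symbol to compatible families. -/
def CompFam.app {n : ℕ} (g : L.Functions n) (a : Fin n → CompFam D F) : CompFam D F where
  dom := ⋂ i, (a i).dom
  dom_mem := F.iInter_mem _ fun i => (a i).dom_mem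
  val p hp := funMap g fun i => (a i).val p (Set.mem_iInter.1 hp i)
  compat := by
    intro b c hb hc hbc
    rw [Hom.map_fun]
    congr 1
    funext i
    exact (a i).compat _ _ hbc

/-- The set `⟦R(a₁, …, aₙ)⟧`. -/
def relSet {n : ℕ} (R : L.Relations n) (a : Fin n → CompFam D F) : Set X :=
  {p | ∃ h : ∀ i, p ∈ (a i).dom, RelMap R fun i => (a i).val p (h i)}

/-- The set `⟦φ(a₁, …, aₙ)⟧` for a positive formula `φ`. -/
def posSet {n : ℕ} (φ : PosFormula L Empty n) (a : Fin n → CompFam D F) : Set X :=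
  {p | ∃ h : ∀ i, p ∈ (a i).dom,
    PosFormula.Realize φ Empty.elim fun i => (a i).val p (h i)}

/-- The filter product of an ordered system with respect to a filter over the index poset. -/
def FilterProd (D : OrderedSystem L X M) (F : PosetFilter X) : Type (max x w) :=
  Quotient (CompFam.setoid D F)

noncomputable instance FilterProd.structure : L.Structure (FilterProd D F) where
  funMap {n} g v :=
    Quotient.mk (CompFam.setoid D F) (CompFam.app g fun i => (v i).out)
  RelMap {n} R v :=
    ∃ a : Fin n → CompFam D F,
      (∀ i, Quotient.mk (CompFam.setoid D F) (a i) = v i) ∧ relSet R a ∈ F.sets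

/-- `(N, g)` is a direct limit (colimit) cocone of the ordered system `D`. -/
structure IsDirectLimitCocone {X : Type x} [Preorder X] {M : X → Type w}
    [∀ a, L.Structure (M a)] (D : OrderedSystem L X M)
    (N : Type z) [L.Structure N] (g : ∀ a, M a →[L] N) : Prop where
  compat : ∀ ⦃a b : X⦄ (hab : a ≤ b) (m : M a), g b (D.hom hab m) = g a m
  universal : ∀ (P : Type (max x w z)) [L.Structure P] (h : ∀ a, M a →[L] P),
    (∀ ⦃a b : X⦄ (hab : a ≤ b) (m : M a), h b (D.hom hab m) = h a m) →
    ∃! k : N →[L] P, ∀ (a : X) (m : M a), k (g a m) = h a m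

/-- A chain of structures: an ordered system indexed by a nonempty well ordered poset. -/
structure ChainSystem (L : FirstOrder.Language.{u, v}) where
  X : Type w
  [lo : LinearOrder X]
  [ne : Nonempty X]
  wf : WellFoundedLT X
  Mi : X → Type w
  [str : ∀ a, L.Structure (Mi a)]
  sys : OrderedSystem L X Mi

attribute [instance] ChainSystem.lo ChainSystem.ne ChainSystem.str

/-- An ordered system indexed by a wellfounded forest, together with a prime filter. -/
structure PrimeSystem (L : FirstOrder.Language.{u, v}) where
  X : Type w
  [po : PartialOrder X]
  forest : IsWellFoundedForest X
  Mi : X → Type w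
  [str : ∀ a, L.Structure (Mi a)]
  sys : OrderedSystem L X Mi
  F : PosetFilter X
  prime : F.Prime

attribute [instance] PrimeSystem.po PrimeSystem.str

/-- The ultrapower `M^ι/u`. -/
def Ultrapower (M : Type w) (ι : Type z) (u : Ultrafilter ι) :
    Type (max w z) :=
  (↑u : Filter ι).Product fun _ => M

noncomputable instance Ultrapower.structure (M : Type w) [L.Structure M] (ι : Type z)
    (u : Ultrafilter ι) : L.Structure (Ultrapower M ι u) :=
  inferInstanceAs (L.Structure ((↑u : Filter ι).Product fun _ => M))

/-- A prime power of the structure `N`: a prime product of an ordered system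
all of whose structures are `N`. -/
structure PrimePowerOf (L : FirstOrder.Language.{u, v}) (N : Type w) [L.Structure N] where
  X : Type x
  [po : PartialOrder X]
  forest : IsWellFoundedForest X
  sys : OrderedSystem L X fun _ => N
  F : PosetFilter X
  prime : F.Prime

attribute [instance] PrimePowerOf.po

/-- The carrier of a prime power. -/
def PrimePowerOf.carrier {N : Type w} [L.Structure N] (p : PrimePowerOf L N) :
    Type (max x w) :=
  FilterProd p.sys p.F

noncomputable instance {N : Type w} [L.Structure N] (p : PrimePowerOf L N) :
    L.Structure p.carrier :=
  inferInstanceAs (L.Structure (FilterProd p.sys p.F))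

/-- Basic h-inductive sentences: universal closures of implications between
positive formulas. -/
structure BasicHInd (L : FirstOrder.Language.{u, v}) : Type (max u v) where
  n : ℕ
  lhs : PosFormula L Empty n
  rhs : PosFormula L Empty n

/-- Satisfaction of a basic h-inductive sentence. -/
def BasicHInd.Realize (φ : BasicHInd L) (M : Type w) [L.Structure M] : Prop :=
  ∀ xs : Fin φ.n → M, φ.lhs.Realize Empty.elim xs → φ.rhs.Realize Empty.elim xs

/-- Satisfaction of an h-inductive theory (a set of h-inductive sentences). -/
def ModelsHInd (M : Type w) [L.Structure M] (T : Set (BasicHInd L)) : Prop :=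
  ∀ φ ∈ T, φ.Realize M

/-- An immersion: a map preserving and reflecting all positive formulas. -/
def IsImmersion {M : Type w} {N : Type x} [L.Structure M] [L.Structure N]
    (f : N → M) : Prop :=
  ∀ {n : ℕ} (φ : PosFormula L Empty n) (xs : Fin n → N),
    PosFormula.Realize φ Empty.elim xs ↔ PosFormula.Realize φ Empty.elim (f ∘ xs)

/-- A positively existentially closed model of an h-inductive theory `T`. -/
def IsPec (T : Set (BasicHInd L)) (M : Type w) [L.Structure M] : Prop :=
  ModelsHInd M T ∧ ∀ (P : Type w) [L.Structure P], ModelsHInd P T →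
    ∀ f : M →[L] P, IsImmersion (L := L) (⇑f : M → P)

/-- Positive `κ`-saturation. -/
def PositivelySaturatedAt (M : Type w) [L.Structure M] (κ : Cardinal.{w}) : Prop :=
  ∀ (γ : Type w) (vp : γ → M), Cardinal.mk γ < κ →
    ∀ (n : ℕ) (p : Set (PosFormula L γ n)),
      (∀ s : Finset (PosFormula L γ n), ↑s ⊆ p →
        ∃ xs : Fin n → M, ∀ φ ∈ s, PosFormula.Realize φ vp xs) →
      ∃ xs : Fin n → M, ∀ φ ∈ p, PosFormula.Realize φ vp xs

/-- Positive saturation: positive `|M|`-saturation. -/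
def PositivelySaturated (M : Type w) [L.Structure M] : Prop :=
  PositivelySaturatedAt (L := L) M (Cardinal.mk M)

/-!
Positive sentences are preserved by homomorphisms, so they are invariant under isomorphism. They
transfer between a structure and its ultrapowers (Łoś; the witness of an `∃` is chosen
coordinatewise) and between a structure and its prime powers over a wellfounded forest. The latter
is the positive Łoś theorem: `φ(⟦a⟧)` holds in the prime product iff `⟦φ(a)⟧ ∈ F`, primality of `F`
taking care of `∨`. For `∃`, choose a witness at every point of `⟦∃ x, φ(a, x)⟧` and give each point
`q` the image of the witness chosen at the least such point below `q`; since principal downsets are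
well ordered, that least point does not move as `q` grows, so these values form a compatible family.
Chaining the transfers through the isomorphism of the two prime powers gives
`M₁ ≡ M₁^ι₁/u₁ ≡ P₁ ≅ P₂ ≡ M₂^ι₂/u₂ ≡ M₂`.
-/

theorem PosFormula.realize_hom {M N : Type*} [L.Structure M] [L.Structure N] (f : M →[L] N) :
    ∀ {n : ℕ} (φ : PosFormula L α n) (v : α → M) (xs : Fin n → M),
      φ.Realize v xs → φ.Realize (f ∘ v) (f ∘ xs)
  | _, .falsum, _, _, h => h
  | _, .equal _ _, _, _, h => by
      simp only [Realize, ← Sum.comp_elim, HomClass.realize_term]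
      exact congrArg f h
  | _, .rel R _, _, _, h => by
      simp only [Realize, ← Sum.comp_elim, HomClass.realize_term]
      exact f.map_rel R _ h
  | _, .and φ ψ, v, xs, h => ⟨φ.realize_hom f v xs h.1, ψ.realize_hom f v xs h.2⟩
  | _, .or φ ψ, v, xs, h => h.imp (φ.realize_hom f v xs) (ψ.realize_hom f v xs)
  | _, .ex φ, v, xs, h => by
      obtain ⟨m, hm⟩ := h
      exact ⟨f m, by simpa only [Fin.comp_snoc] using φ.realize_hom f v _ hm⟩

theorem PosSentence.realize_iff {M : Type*} [L.Structure M] (φ : PosSentence L) {v : Empty → M}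
    {xs : Fin 0 → M} : PosSentence.Realize M φ ↔ PosFormula.Realize φ v xs := by
  rw [Subsingleton.elim v Empty.elim, Subsingleton.elim xs fun i => i.elim0]
  rfl

theorem PosSentence.realize_of_hom {M N : Type*} [L.Structure M] [L.Structure N] (f : M →[L] N)
    {φ : PosSentence L} (h : PosSentence.Realize M φ) : PosSentence.Realize N φ :=
  φ.realize_iff.2 (φ.realize_hom f Empty.elim finZeroElim h)

theorem PosSentence.realize_congr {M N : Type*} [L.Structure M] [L.Structure N] (e : M ≃[L] N)
    (φ : PosSentence L) : PosSentence.Realize M φ ↔ PosSentence.Realize N φ :=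
  ⟨realize_of_hom e.toHom, realize_of_hom e.symm.toHom⟩

section Ultrapower

open Filter

variable {ι : Type*} {u : Ultrafilter ι} {N : Type*} [L.Structure N]

theorem PosFormula.realize_ultrapower_cast {n : ℕ} (φ : PosFormula L α n) (v : α → ι → N)
    (xs : Fin n → ι → N) :
    φ.Realize (fun i => (v i : (u : Filter ι).Product fun _ => N))
        (fun i => (xs i : (u : Filter ι).Product fun _ => N)) ↔
      ∀ᶠ a in u, φ.Realize (fun i => v i a) fun i => xs i a := by
  have helim {k : ℕ} (xs : Fin k → ι → N) (a : ι) :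
      (Sum.elim (fun i => v i a) fun i => xs i a) = fun i => Sum.elim v xs i a :=
    funext fun i => Sum.casesOn i (fun _ => rfl) fun _ => rfl
  induction φ with
  | falsum => simp only [Realize, eventually_const]
  | equal =>
    simp only [Realize, helim]
    erw [(Sum.comp_elim ((↑) : (ι → N) → (u : Filter ι).Product fun _ => N) v xs).symm,
      Ultraproduct.term_realize_cast, Ultraproduct.term_realize_cast]
    exact Quotient.eq''
  | rel =>
    simp only [Realize, helim]
    erw [(Sum.comp_elim ((↑) : (ι → N) → (u : Filter ι).Product fun _ => N) v xs).symm]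
    conv_lhs => enter [2, i]; erw [Ultraproduct.term_realize_cast]
    apply relMap_quotient_mk'
  | and _ _ ih ih' => simp only [Realize, ih, ih', eventually_and]
  | or _ _ ih ih' => simp only [Realize, ih, ih', Ultrafilter.eventually_or]
  | ex φ ih =>
    have hsnoc {k : ℕ} (xs : Fin k → ι → N) (g : ι → N) (a : ι) :
        (fun i => Fin.snoc (α := fun _ => ι → N) xs g i a) = Fin.snoc (fun i => xs i a) (g a) :=
      Fin.comp_snoc (fun f : ι → N => f a) xs g
    have hcast {k : ℕ} (xs : Fin k → ι → N) (g : ι → N) :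
        Fin.snoc (fun i => (xs i : (u : Filter ι).Product fun _ => N))
            (g : (u : Filter ι).Product fun _ => N) =
          fun i => (Fin.snoc (α := fun _ => ι → N) xs g i : (u : Filter ι).Product fun _ => N) :=
      (Fin.comp_snoc _ xs g).symm
    simp only [Realize]
    constructor
    · rintro ⟨c, hc⟩
      induction c using Quotient.inductionOn' with | h g => ?_
      erw [hcast] at hc
      exact ((ih _).1 hc).mono fun a ha => ⟨g a, by rwa [← hsnoc]⟩
    · intro h
      have : Nonempty N := let ⟨_, m, _⟩ := h.exists; ⟨m⟩
      let g a :=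
        Classical.epsilon fun m => φ.Realize (fun i => v i a) (Fin.snoc (fun i => xs i a) m)
      refine ⟨(g : (u : Filter ι).Product fun _ => N), ?_⟩
      rw [hcast]
      exact (ih _).2 (h.mono fun a ha => by rw [hsnoc]; exact Classical.epsilon_spec ha)

theorem PosSentence.realize_ultrapower_iff (N : Type*) [L.Structure N] (ι : Type*)
    (u : Ultrafilter ι) (φ : PosSentence L) :
    PosSentence.Realize (Ultrapower N ι u) φ ↔ PosSentence.Realize N φ := by
  show PosSentence.Realize ((u : Filter ι).Product fun _ => N) φ ↔ _
  refine φ.realize_iff.trans ((φ.realize_ultrapower_cast Empty.elim finZeroElim).trans ?_)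
  simp only [← φ.realize_iff, eventually_const]

end Ultrapower

namespace PosetFilter

variable (F : PosetFilter X)

theorem inter_mem_iff {V W : Set X} (hV : IsUpperSet V) (hW : IsUpperSet W) :
    V ∩ W ∈ F.sets ↔ V ∈ F.sets ∧ W ∈ F.sets :=
  ⟨fun h => ⟨F.mono' _ h V hV inter_subset_left, F.mono' _ h W hW inter_subset_right⟩,
    fun h => F.inter' V h.1 W h.2⟩

theorem union_mem_iff {F : PosetFilter X} (hF : F.Prime) {V W : Set X} (hV : IsUpperSet V)
    (hW : IsUpperSet W) : V ∪ W ∈ F.sets ↔ V ∈ F.sets ∨ W ∈ F.sets :=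
  ⟨hF.2 V W hV hW, fun h => h.elim (fun h => F.mono' V h _ (hV.union hW) subset_union_left)
    (fun h => F.mono' W h _ (hV.union hW) subset_union_right)⟩

theorem setOf_const_mem_iff {F : PosetFilter X} (hF : F.Prime) (P : Prop) :
    {_x : X | P} ∈ F.sets ↔ P := by
  by_cases hP : P
  · simpa only [hP, ofPred_true, iff_true] using F.univ_mem
  · simpa only [hP, ofPred_false, iff_false] using hF.1

end PosetFilter

theorem iInter_dom_mem {n : ℕ} (a : Fin n → CompFam D F) : ⋂ i, (a i).dom ∈ F.sets :=
  F.iInter_mem _ fun i => (a i).dom_mem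

theorem isUpperSet_iInter_dom {n : ℕ} (a : Fin n → CompFam D F) : IsUpperSet (⋂ i, (a i).dom) :=
  isUpperSet_iInter fun i => F.upper' _ (a i).dom_mem

theorem posSet_upper {n : ℕ} (φ : PosFormula L Empty n) (a : Fin n → CompFam D F) :
    IsUpperSet (posSet φ a) := by
  rintro p q hpq ⟨h, hφ⟩
  refine ⟨fun i => F.upper' _ (a i).dom_mem hpq (h i), ?_⟩
  convert φ.realize_hom (D.hom hpq) _ _ hφ
  exact ((a _).compat (h _) _ hpq).symm

theorem relSet_upper {n : ℕ} (R : L.Relations n) (a : Fin n → CompFam D F) :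
    IsUpperSet (relSet R a) := by
  rintro p q hpq ⟨h, hR⟩
  refine ⟨fun i => F.upper' _ (a i).dom_mem hpq (h i), ?_⟩
  convert (D.hom hpq).map_rel R _ hR
  exact ((a _).compat (h _) _ hpq).symm

def FilterProd.mk (c : CompFam D F) : FilterProd D F := ⟦c⟧

theorem FilterProd.mk_surjective : Function.Surjective (FilterProd.mk : CompFam D F → _) :=
  Quotient.mk_surjective

theorem relMap_mk_iff {n : ℕ} (R : L.Relations n) (c : Fin n → CompFam D F) :
    RelMap R (fun i => FilterProd.mk (c i)) ↔ relSet R c ∈ F.sets := by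
  refine ⟨fun ⟨b, hb, hR⟩ => ?_, fun h => ⟨c, fun _ => rfl, h⟩⟩
  have hbc : ∀ i, eqSet (b i) (c i) ∈ F.sets := fun i => Quotient.exact (hb i)
  refine F.mono' _ (F.inter' _ hR _ (F.iInter_mem _ hbc)) _ (relSet_upper R c) ?_
  rintro p ⟨⟨_, hRp⟩, heq⟩
  choose _ hc he using mem_iInter.1 heq
  refine ⟨hc, ?_⟩
  convert hRp using 2
  exact (he _).symm

theorem CompFam.app_equiv {n : ℕ} (g : L.Functions n) {b c : Fin n → CompFam D F}
    (h : ∀ i, b i ≈ c i) : app g b ≈ app g c := by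
  refine F.mono' _ (F.iInter_mem _ h) _ (eqSet_upper _ _) fun p hp => ?_
  choose hb hc he using mem_iInter.1 hp
  exact ⟨mem_iInter.2 hb, mem_iInter.2 hc, congrArg (funMap g) (funext he)⟩

theorem funMap_mk {n : ℕ} (g : L.Functions n) (a : Fin n → CompFam D F) :
    funMap g (fun i => FilterProd.mk (a i)) = FilterProd.mk (CompFam.app g a) :=
  Quotient.sound (CompFam.app_equiv g fun i => Quotient.mk_out (a i))

def termFam {n : ℕ} (a : Fin n → CompFam D F) : L.Term (Empty ⊕ Fin n) → CompFam D F
  | .var (Sum.inl e) => e.elim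
  | .var (Sum.inr i) => a i
  | .func g ts => CompFam.app g fun i => termFam a (ts i)

theorem mem_termFam_dom {n : ℕ} {a : Fin n → CompFam D F} {p : X} (h : ∀ i, p ∈ (a i).dom) :
    ∀ t : L.Term (Empty ⊕ Fin n), p ∈ (termFam a t).dom
  | .var (Sum.inl e) => e.elim
  | .var (Sum.inr i) => h i
  | .func _ ts => mem_iInter.2 fun i => mem_termFam_dom h (ts i)

theorem termFam_val {n : ℕ} {a : Fin n → CompFam D F} {p : X} (h : ∀ i, p ∈ (a i).dom) :
    ∀ (t : L.Term (Empty ⊕ Fin n)) (hp : p ∈ (termFam a t).dom),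
      (termFam a t).val p hp = t.realize (Sum.elim Empty.elim fun i => (a i).val p (h i))
  | .var (Sum.inl e), _ => e.elim
  | .var (Sum.inr _), _ => rfl
  | .func g ts, _ => congrArg (funMap g) (funext fun i => termFam_val h (ts i) _)

theorem term_realize_mk {n : ℕ} (a : Fin n → CompFam D F) (t : L.Term (Empty ⊕ Fin n)) :
    t.realize (Sum.elim Empty.elim fun i => FilterProd.mk (a i)) = FilterProd.mk (termFam a t) := by
  induction t with
  | var x =>
    rcases x with e | i
    · exact e.elim
    · rfl
  | func g ts ih => rw [Term.realize, funext ih, funMap_mk]; rfl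

theorem posSet_falsum {n : ℕ} (a : Fin n → CompFam D F) : posSet .falsum a = ∅ :=
  eq_empty_of_forall_notMem fun _ ⟨_, h⟩ => h

theorem posSet_equal {n : ℕ} (t₁ t₂ : L.Term (Empty ⊕ Fin n)) (a : Fin n → CompFam D F) :
    posSet (.equal t₁ t₂) a = eqSet (termFam a t₁) (termFam a t₂) ∩ ⋂ i, (a i).dom := by
  ext p
  simp only [posSet, eqSet, PosFormula.Realize, mem_inter_iff, mem_iInter]
  constructor
  · rintro ⟨h, he⟩
    exact ⟨⟨mem_termFam_dom h t₁, mem_termFam_dom h t₂, by rw [termFam_val h, termFam_val h, he]⟩,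
      h⟩
  · rintro ⟨⟨_, _, he⟩, h⟩
    exact ⟨h, by rwa [termFam_val h, termFam_val h] at he⟩

theorem posSet_rel {n l : ℕ} (R : L.Relations l) (ts : Fin l → L.Term (Empty ⊕ Fin n))
    (a : Fin n → CompFam D F) :
    posSet (.rel R ts) a = relSet R (fun i => termFam a (ts i)) ∩ ⋂ i, (a i).dom := by
  ext p
  simp only [posSet, relSet, PosFormula.Realize, mem_inter_iff, mem_iInter]
  constructor
  · rintro ⟨h, hR⟩
    exact ⟨⟨fun i => mem_termFam_dom h (ts i), by simpa only [termFam_val h] using hR⟩, h⟩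
  · rintro ⟨⟨_, hR⟩, h⟩
    exact ⟨h, by simpa only [termFam_val h] using hR⟩

theorem posSet_and {n : ℕ} (φ ψ : PosFormula L Empty n) (a : Fin n → CompFam D F) :
    posSet (φ.and ψ) a = posSet φ a ∩ posSet ψ a := by
  ext p
  exact ⟨fun ⟨h, h₁, h₂⟩ => ⟨⟨h, h₁⟩, ⟨h, h₂⟩⟩, fun ⟨⟨h, h₁⟩, ⟨_, h₂⟩⟩ => ⟨h, h₁, h₂⟩⟩

theorem posSet_or {n : ℕ} (φ ψ : PosFormula L Empty n) (a : Fin n → CompFam D F) :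
    posSet (φ.or ψ) a = posSet φ a ∪ posSet ψ a := by
  ext p
  exact ⟨fun ⟨h, hφψ⟩ => hφψ.imp (⟨h, ·⟩) (⟨h, ·⟩),
    fun h => h.elim (fun ⟨h, hφ⟩ => ⟨h, .inl hφ⟩) (fun ⟨h, hψ⟩ => ⟨h, .inr hψ⟩)⟩

theorem CompFam.val_snoc {n : ℕ} {a : Fin n → CompFam D F} {b : CompFam D F} {p : X}
    (h : ∀ i, p ∈ (Fin.snoc (α := fun _ => CompFam D F) a b i).dom) :
    (fun i => (Fin.snoc (α := fun _ => CompFam D F) a b i).val p (h i)) =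
      Fin.snoc (fun i => (a i).val p (by simpa using h i.castSucc))
        (b.val p (by simpa using h (Fin.last n))) := by
  funext i
  refine Fin.lastCases ?_ (fun j => ?_) i <;> simp only [Fin.snoc_last, Fin.snoc_castSucc]

theorem mem_posSet_snoc {n : ℕ} {φ : PosFormula L Empty (n + 1)} {a : Fin n → CompFam D F}
    {b : CompFam D F} {p : X} :
    p ∈ posSet φ (Fin.snoc a b) ↔ ∃ (h : ∀ i, p ∈ (a i).dom) (hb : p ∈ b.dom),
      φ.Realize Empty.elim (Fin.snoc (fun i => (a i).val p (h i)) (b.val p hb)) := by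
  constructor
  · rintro ⟨h, hφ⟩
    exact ⟨_, _, CompFam.val_snoc h ▸ hφ⟩
  · rintro ⟨ha, hb, hφ⟩
    have h : ∀ i, p ∈ (Fin.snoc (α := fun _ => CompFam D F) a b i).dom :=
      Fin.lastCases (by simpa only [Fin.snoc_last])
        fun j => by simpa only [Fin.snoc_castSucc] using ha j
    exact ⟨h, by rwa [CompFam.val_snoc h]⟩

theorem posSet_eq_setOf_realize (φ : PosSentence L) (a : Fin 0 → CompFam D F) :
    posSet φ a = {p | PosSentence.Realize (M p) φ} := by
  ext p
  exact ⟨fun ⟨_, hφ⟩ => φ.realize_iff.2 hφ, fun hφ => ⟨finZeroElim, φ.realize_iff.1 hφ⟩⟩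

namespace IsWellFoundedForest

variable (hX : IsWellFoundedForest X) (V : Set X)

noncomputable def leastBelow {p : X} (hp : p ∈ V) : X :=
  ((hX p).toIsWellFounded.wf.min {r : Iic p | (r : X) ∈ V} ⟨⟨p, le_rfl⟩, hp⟩).1

variable {V}

theorem leastBelow_mem {p : X} (hp : p ∈ V) : hX.leastBelow V hp ∈ V :=
  (hX p).toIsWellFounded.wf.min_mem {r : Iic p | (r : X) ∈ V} _

theorem leastBelow_le {p : X} (hp : p ∈ V) : hX.leastBelow V hp ≤ p :=
  ((hX p).toIsWellFounded.wf.min {r : Iic p | (r : X) ∈ V} _).2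

theorem leastBelow_le_of_mem {p s : X} (hp : p ∈ V) (hsp : s ≤ p) (hs : s ∈ V) :
    hX.leastBelow V hp ≤ s := by
  have := hX p
  obtain h | h | h := trichotomous_of (· < ·)
    ((hX p).toIsWellFounded.wf.min {r : Iic p | (r : X) ∈ V} ⟨⟨p, le_rfl⟩, hp⟩) ⟨s, hsp⟩
  · exact h.le
  · exact (congrArg Subtype.val h).le
  · exact absurd h ((hX p).toIsWellFounded.wf.not_lt_min _ (x := ⟨s, hsp⟩) hs)

theorem leastBelow_eq_of_le {p q : X} (hp : p ∈ V) (hq : q ∈ V) (hpq : p ≤ q) :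
    hX.leastBelow V hp = hX.leastBelow V hq := by
  have hqp : hX.leastBelow V hq ≤ hX.leastBelow V hp :=
    hX.leastBelow_le_of_mem hq ((hX.leastBelow_le hp).trans hpq) (hX.leastBelow_mem hp)
  exact le_antisymm (hX.leastBelow_le_of_mem hp (hqp.trans (hX.leastBelow_le hp))
    (hX.leastBelow_mem hq)) hqp

end IsWellFoundedForest

theorem exists_posSet_snoc_mem (hX : IsWellFoundedForest X) {n : ℕ} {φ : PosFormula L Empty (n + 1)}
    {a : Fin n → CompFam D F} (hV : posSet φ.ex a ∈ F.sets) :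
    ∃ b : CompFam D F, posSet φ (Fin.snoc a b) ∈ F.sets := by
  set V := posSet φ.ex a
  have hwit : ∀ p ∈ V, ∃ m : M p, ∀ h : ∀ i, p ∈ (a i).dom,
      φ.Realize Empty.elim (Fin.snoc (fun i => (a i).val p (h i)) m) := by
    rintro p ⟨_, m, hm⟩
    exact ⟨m, fun _ => hm⟩
  choose w hw using hwit
  -- The witness at `q` is transported from the least point of `V` below `q`.
  let b : CompFam D F :=
    { dom := V
      dom_mem := hV
      val := fun q hq => D.hom (hX.leastBelow_le hq) (w _ (hX.leastBelow_mem hq))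
      compat := fun p q hp hq hpq => by
        rw [D.hom_comp]
        exact congrArg (fun r : {r // r ∈ V ∧ r ≤ q} => D.hom r.2.2 (w r r.2.1))
          (a₁ := ⟨_, hX.leastBelow_mem hp, (hX.leastBelow_le hp).trans hpq⟩)
          (a₂ := ⟨_, hX.leastBelow_mem hq, hX.leastBelow_le hq⟩)
          (Subtype.ext (hX.leastBelow_eq_of_le hp hq hpq)) }
  refine ⟨b, F.mono' V hV _ (posSet_upper _ _) fun q hq => mem_posSet_snoc.2 ?_⟩
  obtain ⟨hqa, -⟩ := id hq
  obtain ⟨hra, -⟩ := hX.leastBelow_mem hq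
  refine ⟨hqa, hq, ?_⟩
  convert φ.realize_hom (D.hom (hX.leastBelow_le hq)) _ _ (hw _ (hX.leastBelow_mem hq) hra)
  rw [Fin.comp_snoc]
  congr 1
  funext i
  exact ((a i).compat _ _ _).symm

theorem PosFormula.realize_filterProd_mk_iff (hX : IsWellFoundedForest X) (hF : F.Prime) :
    ∀ {n : ℕ} (φ : PosFormula L Empty n) (a : Fin n → CompFam D F),
      φ.Realize Empty.elim (fun i => FilterProd.mk (a i)) ↔ posSet φ a ∈ F.sets
  | _, .falsum, a => by
    rw [posSet_falsum]
    exact iff_of_false id hF.1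
  | _, .equal t₁ t₂, a => by
    show t₁.realize _ = t₂.realize _ ↔ _
    rw [term_realize_mk, term_realize_mk, posSet_equal,
      F.inter_mem_iff (eqSet_upper _ _) (isUpperSet_iInter_dom a), and_iff_left (iInter_dom_mem a)]
    exact Quotient.eq
  | _, .rel R ts, a => by
    show RelMap R (fun i => (ts i).realize _) ↔ _
    rw [funext fun i => term_realize_mk a (ts i), relMap_mk_iff, posSet_rel,
      F.inter_mem_iff (relSet_upper _ _) (isUpperSet_iInter_dom a), and_iff_left (iInter_dom_mem a)]
  | _, .and φ ψ, a => by
    rw [posSet_and, F.inter_mem_iff (posSet_upper φ a) (posSet_upper ψ a),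
      ← realize_filterProd_mk_iff hX hF φ a, ← realize_filterProd_mk_iff hX hF ψ a]
    rfl
  | _, .or φ ψ, a => by
    rw [posSet_or, PosetFilter.union_mem_iff hF (posSet_upper φ a) (posSet_upper ψ a),
      ← realize_filterProd_mk_iff hX hF φ a, ← realize_filterProd_mk_iff hX hF ψ a]
    rfl
  | _, .ex φ, a => by
    have hsnoc (b : CompFam D F) : Fin.snoc (fun i => FilterProd.mk (a i)) (FilterProd.mk b) =
        fun i => FilterProd.mk (Fin.snoc (α := fun _ => CompFam D F) a b i) :=
      (Fin.comp_snoc _ a b).symm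
    constructor
    · rintro ⟨c, hc⟩
      obtain ⟨b, rfl⟩ := FilterProd.mk_surjective c
      rw [hsnoc, realize_filterProd_mk_iff hX hF φ] at hc
      refine F.mono' _ hc _ (posSet_upper _ a) fun p hp => ?_
      obtain ⟨h, hb, hφ⟩ := mem_posSet_snoc.1 hp
      exact ⟨h, _, hφ⟩
    · intro h
      obtain ⟨b, hb⟩ := exists_posSet_snoc_mem hX h
      exact ⟨FilterProd.mk b, by rwa [hsnoc, realize_filterProd_mk_iff hX hF φ]⟩

theorem PosSentence.realize_primePower_iff {N : Type*} [L.Structure N] (p : PrimePowerOf L N)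
    (φ : PosSentence L) :
    PosSentence.Realize (FilterProd p.sys p.F) φ ↔ PosSentence.Realize N φ := by
  rw [φ.realize_iff (v := Empty.elim) (xs := fun i => FilterProd.mk (i.elim0 : CompFam p.sys p.F)),
    PosFormula.realize_filterProd_mk_iff p.forest p.prime, posSet_eq_setOf_realize,
    PosetFilter.setOf_const_mem_iff p.prime]

/-- Two structures with isomorphic prime powers of ultrapowers are positively equivalent. -/
theorem stmt18 (M₁ M₂ : Type w) [L.Structure M₁] [L.Structure M₂]
    (ι₁ ι₂ : Type w) (u₁ : Ultrafilter ι₁) (u₂ : Ultrafilter ι₂)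
    (p₁ : PrimePowerOf L (Ultrapower M₁ ι₁ u₁)) (p₂ : PrimePowerOf L (Ultrapower M₂ ι₂ u₂))
    (h : Nonempty (FilterProd p₁.sys p₁.F ≃[L] FilterProd p₂.sys p₂.F)) :
    PosEquivalent (L := L) M₁ M₂ := by
  obtain ⟨e⟩ := h
  intro φ
  rw [← PosSentence.realize_ultrapower_iff M₁ ι₁ u₁, ← PosSentence.realize_primePower_iff p₁,
    PosSentence.realize_congr e, PosSentence.realize_primePower_iff p₂,
    PosSentence.realize_ultrapower_iff]
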